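/- If f ∈ L_{q,1,v}, then for all x, y ∈ ℝ_q^+ the q-translation T_{q,x}^v f(y) is well defined (the defining series converges absolutely) and T_{q,x}^v f(y) = ∫₀^∞ f(z) D_v(x,y,z) z^{2v+1} d_q z, where D_v(x,y,z) = c_{q,v}² ∫₀^∞ j_v(xs,q²) j_v(ys,q²) j_v(zs,q²) s^{2v+1} d_q s. -/

import Mathlib

open scoped BigOperators

noncomputable section

/-- The finite q-Pochhammer symbol `(a; q)_n`. -/
def qPoch (a q : ℝ) (n : ℕ) : ℝ := ∏ k ∈ Finset.range n, (1 - a * q ^ k)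

/-- The infinite q-Pochhammer symbol `(a; q)_∞`. -/
def qPochInf (a q : ℝ) : ℝ := ∏' k : ℕ, (1 - a * q ^ k)

/-- The normalized q-Bessel function `j_v(x, q²)`. -/
def jv (q v x : ℝ) : ℝ :=
  ∑' n : ℕ, (-1 : ℝ) ^ n * q ^ (n * (n + 1)) /
    (qPoch (q ^ (2 * v + 2)) (q ^ 2) n * qPoch ((q : ℝ) ^ (2 : ℕ)) (q ^ 2) n) * x ^ (2 * n)

/-- The set `ℝ_q^+ = {q^n : n ∈ ℤ}`. -/
def Rq (q : ℝ) : Set ℝ := {x | ∃ n : ℤ, x = q ^ n}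

/-- The q-Jackson integral `∫₀^∞ f(t) d_q t = (1-q) Σ_{n∈ℤ} q^n f(q^n)`. -/
def jackson (q : ℝ) (f : ℝ → ℝ) : ℝ := (1 - q) * ∑' n : ℤ, q ^ n * f (q ^ n)

/-- Absolute convergence of the defining series of the q-Jackson integral. -/
def JacksonSummable (q : ℝ) (f : ℝ → ℝ) : Prop :=
  Summable fun n : ℤ => q ^ n * |f (q ^ n)|

/-- The constant `c_{q,v}`. -/
def cqv (q v : ℝ) : ℝ :=
  (1 / (1 - q)) * qPochInf (q ^ (2 * v + 2)) (q ^ 2) / qPochInf ((q : ℝ) ^ (2 : ℕ)) (q ^ 2)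

/-- Membership in `L_{q,p,v}`: absolute convergence of `∫₀^∞ |f(x)|^p x^{2v+1} d_q x`. -/
def MemLqpv (q v p : ℝ) (f : ℝ → ℝ) : Prop :=
  JacksonSummable q (fun t => |f t| ^ p * t ^ (2 * v + 1))

/-- The q-Bessel Fourier transform `F_{q,v}`. -/
def Fqv (q v : ℝ) (f : ℝ → ℝ) (x : ℝ) : ℝ :=
  cqv q v * jackson q (fun t => f t * jv q v (x * t) * t ^ (2 * v + 1))

/-- The q-translation operator `T_{q,x}^v`. -/
def Tqv (q v x : ℝ) (f : ℝ → ℝ) (y : ℝ) : ℝ :=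
  cqv q v * jackson q (fun t => Fqv q v f t * jv q v (y * t) * jv q v (x * t) * t ^ (2 * v + 1))

/-- The kernel `D_v(x,y,z)`. -/
def Dv (q v x y z : ℝ) : ℝ :=
  (cqv q v) ^ (2 : ℕ) *
    jackson q (fun s => jv q v (x * s) * jv q v (y * s) * jv q v (z * s) * s ^ (2 * v + 1))

/-- The q-convolution product `f ∗_q g`. -/
def qConv (q v : ℝ) (f g : ℝ → ℝ) (x : ℝ) : ℝ :=
  cqv q v * jackson q (fun y => Tqv q v x f y * g y * y ^ (2 * v + 1))

/-- The inner product of the Hilbert space `L_{q,2,v}`. -/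
def inner2 (q v : ℝ) (f g : ℝ → ℝ) : ℝ :=
  jackson q (fun t => f t * g t * t ^ (2 * v + 1))

/-- The q-translation operator expressed through the kernel `D_v`. -/
def TD (q v x : ℝ) (f : ℝ → ℝ) (y : ℝ) : ℝ :=
  jackson q (fun z => f z * Dv q v x y z * z ^ (2 * v + 1))

/-- The q-Bessel operator `Δ_{q,v}`. -/
def DeltaQ (q v : ℝ) (f : ℝ → ℝ) (x : ℝ) : ℝ :=
  (1 / x ^ (2 : ℕ)) *
    (f (q⁻¹ * x) - (1 + q ^ (2 * v)) * f x + q ^ (2 * v) * f (q * x))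

/-!
At `t = q^n` the weight `t^(2v+1) d_q t` is `c^n` with `c = q^(2v+2)`, so both sides are the two
iterated sums of the double series `∑_{n,m} c^n c^m f(q^m) j_v(q^(n+m)) j_v(y q^n) j_v(x q^n)`, and
it suffices to show that this series converges absolutely. As `f ∈ L_{q,1,v}` and `j_v` is bounded
on `ℝ_q^+`, this reduces to `j_v(x ·) ∈ L_{q,1,v}`, i.e. to the decay `j_v(q^(-k)) = O((q c)^k)`.
That decay comes from Euler's series `E(w) = (w;q²)_∞ = ∑_m e_m w^m`: one has
`E(c) j_v(x) = ∑_m e_m c^m E(x² q^(2m+2))`, and `E` vanishes at the nonpositive powers of `q²`,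
so for `x = q^(-k)` the first `k` terms drop out.
-/

open Filter Topology

theorem norm_mul_pow_le_abs (a : ℝ) {u : ℝ} (hu : |u| ≤ 1) (m : ℕ) : ‖a * u ^ m‖ ≤ |a| := by
  rw [Real.norm_eq_abs, abs_mul, abs_pow]
  exact mul_le_of_le_one_right (abs_nonneg a) (pow_le_one₀ (abs_nonneg u) hu)

theorem abs_tsum_mul_pow_le {a : ℕ → ℝ} (ha : Summable fun m => |a m|) {u : ℝ} (hu : |u| ≤ 1) :
    |∑' m, a m * u ^ m| ≤ ∑' m, |a m| :=
  tsum_of_norm_bounded ha.hasSum fun m => norm_mul_pow_le_abs (a m) hu m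

theorem abs_tsum_mul_pow_sub_le {a : ℕ → ℝ} (ha : Summable fun m => |a m|) {u : ℝ}
    (hu : |u| ≤ 1) : |∑' m, a m * u ^ m - a 0| ≤ (∑' m, |a m|) * |u| := by
  have hs : Summable fun m => a m * u ^ m :=
    .of_norm_bounded ha fun m => norm_mul_pow_le_abs (a m) hu m
  rw [hs.tsum_eq_zero_add, pow_zero, mul_one, add_sub_cancel_left]
  refine (tsum_of_norm_bounded (f := fun m => a (m + 1) * u ^ (m + 1))
    (((summable_nat_add_iff 1).mpr ha).hasSum.mul_right |u|) fun m => ?_).trans ?_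
  · rw [Real.norm_eq_abs, abs_mul, abs_pow, pow_succ]
    exact mul_le_mul_of_nonneg_left (mul_le_of_le_one_left (abs_nonneg u)
      (pow_le_one₀ (abs_nonneg u) hu)) (abs_nonneg _)
  · refine mul_le_mul_of_nonneg_right ?_ (abs_nonneg u)
    rw [ha.tsum_eq_zero_add]
    exact le_add_of_nonneg_left (abs_nonneg _)

theorem abs_tsum_le_of_eq_zero_of_abs_le_geometric {f : ℕ → ℝ} {B r : ℝ} (K : ℕ) (hr0 : 0 ≤ r)
    (hr1 : r < 1) (hzero : ∀ m < K, f m = 0) (hle : ∀ m, K ≤ m → |f m| ≤ B * r ^ m) :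
    |∑' m, f m| ≤ B * r ^ K * (1 - r)⁻¹ := by
  have htail : ∀ i, ‖f (i + K)‖ ≤ B * r ^ K * r ^ i := fun i => by
    rw [Real.norm_eq_abs, mul_assoc, ← pow_add, add_comm K]
    exact hle _ le_add_self
  have hgeom := (hasSum_geometric_of_lt_one hr0 hr1).mul_left (B * r ^ K)
  have hf : Summable f := (summable_nat_add_iff K).mp (.of_norm_bounded hgeom.summable htail)
  rw [← hf.sum_add_tsum_nat_add K, Finset.sum_eq_zero fun m hm => hzero m (Finset.mem_range.mp hm),
    zero_add]
  exact tsum_of_norm_bounded hgeom htail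

section QPochhammer

variable {a p : ℝ}

theorem qPoch_succ (a p : ℝ) (n : ℕ) : qPoch a p (n + 1) = qPoch a p n * (1 - a * p ^ n) :=
  Finset.prod_range_succ _ _

/-- Bernoulli's inequality `(1 - a) ^ (p ^ k) ≤ 1 - a p ^ k`, multiplied over `k < n`. -/
theorem rpow_inv_one_sub_le_qPoch (hp0 : 0 ≤ p) (hp1 : p < 1) (ha0 : 0 ≤ a) (ha1 : a < 1)
    (n : ℕ) : (1 - a) ^ (1 - p)⁻¹ ≤ qPoch a p n := by
  have hgeom : ∑ k ∈ Finset.range n, p ^ k ≤ (1 - p)⁻¹ :=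
    sum_le_hasSum _ (fun k _ => pow_nonneg hp0 k) (hasSum_geometric_of_lt_one hp0 hp1)
  calc (1 - a) ^ (1 - p)⁻¹ ≤ (1 - a) ^ ∑ k ∈ Finset.range n, p ^ k :=
        Real.rpow_le_rpow_of_exponent_ge (by linarith) (by linarith) hgeom
    _ = ∏ k ∈ Finset.range n, (1 - a) ^ p ^ k := Real.rpow_sum_of_pos (by linarith) _ _
    _ ≤ qPoch a p n := Finset.prod_le_prod (fun k _ => by positivity) fun k _ => by
        have := rpow_one_add_le_one_add_mul_self (s := -a) (by linarith) (pow_nonneg hp0 k)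
          (pow_le_one₀ hp0 hp1.le)
        rw [← sub_eq_add_neg] at this
        linarith

theorem qPoch_pos (hp0 : 0 ≤ p) (hp1 : p < 1) (ha0 : 0 ≤ a) (ha1 : a < 1) (n : ℕ) :
    0 < qPoch a p n :=
  (Real.rpow_pos_of_pos (by linarith) _).trans_le (rpow_inv_one_sub_le_qPoch hp0 hp1 ha0 ha1 n)

end QPochhammer

theorem two_mul_choose_two_add_self (n : ℕ) : 2 * (n.choose 2 + n) = n * (n + 1) := by
  have h := Nat.add_one_mul_choose_eq n 1
  rw [Nat.choose_one_right, Nat.choose_succ_succ', Nat.choose_one_right] at h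
  linarith

theorem le_two_mul_choose_two_add_one (n : ℕ) : n ≤ 2 * n.choose 2 + 1 := by
  nlinarith [two_mul_choose_two_add_self n]

section EulerSeries

variable {p : ℝ}

/-- The coefficients `(-1)^m p^(m(m-1)/2) / (p;p)_m` of Euler's expansion of `(w;p)_∞`. -/
def eulerCoeff (p : ℝ) (m : ℕ) : ℝ := (-1) ^ m * p ^ m.choose 2 / qPoch p p m

def eulerSeries (p w : ℝ) : ℝ := ∑' m, eulerCoeff p m * w ^ m

theorem eulerCoeff_zero : eulerCoeff p 0 = 1 := by simp [eulerCoeff, qPoch]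

theorem abs_eulerCoeff_le (hp0 : 0 < p) (hp1 : p < 1) (m : ℕ) :
    |eulerCoeff p m| ≤ p ^ m.choose 2 / (1 - p) ^ (1 - p)⁻¹ := by
  have hδ := rpow_inv_one_sub_le_qPoch hp0.le hp1 hp0.le hp1 m
  rw [eulerCoeff, abs_div, abs_mul, abs_pow, abs_neg, abs_one, one_pow, one_mul,
    abs_of_pos (pow_pos hp0 _), abs_of_pos (qPoch_pos hp0.le hp1 hp0.le hp1 m)]
  exact div_le_div_of_nonneg_left (by positivity) (Real.rpow_pos_of_pos (by linarith) _) hδ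

theorem summable_pow_choose_two_mul_pow (hp0 : 0 ≤ p) (hp1 : p < 1) (A : ℝ) :
    Summable fun m : ℕ => p ^ m.choose 2 * A ^ m := by
  refine summable_of_ratio_norm_eventually_le (r := 1 / 2) (by norm_num) ?_
  have h0 : Tendsto (fun m : ℕ => p ^ m * |A|) atTop (𝓝 0) := by
    simpa using (tendsto_pow_atTop_nhds_zero_of_lt_one hp0 hp1).mul_const |A|
  filter_upwards [h0.eventually_le_const (by norm_num : (0:ℝ) < 1 / 2)] with m hm
  rw [Nat.choose_succ_succ', Nat.choose_one_right, Real.norm_eq_abs, Real.norm_eq_abs,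
    show p ^ (m + m.choose 2) * A ^ (m + 1) = (p ^ m * A) * (p ^ m.choose 2 * A ^ m) by ring,
    abs_mul, abs_mul, abs_of_nonneg (pow_nonneg hp0 m)]
  exact mul_le_mul_of_nonneg_right hm (abs_nonneg _)

theorem summable_eulerCoeff_mul_pow (hp0 : 0 < p) (hp1 : p < 1) (w : ℝ) :
    Summable fun m => eulerCoeff p m * w ^ m := by
  refine .of_norm_bounded ((summable_pow_choose_two_mul_pow hp0.le hp1 |w|).div_const
    ((1 - p) ^ (1 - p)⁻¹)) fun m => ?_
  rw [Real.norm_eq_abs, abs_mul, abs_pow, mul_div_right_comm]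
  exact mul_le_mul_of_nonneg_right (abs_eulerCoeff_le hp0 hp1 m) (by positivity)

theorem summable_abs_eulerCoeff (hp0 : 0 < p) (hp1 : p < 1) :
    Summable fun m => |eulerCoeff p m| := by
  simpa using (summable_eulerCoeff_mul_pow hp0 hp1 1).abs

theorem eulerCoeff_succ_mul (hp0 : 0 < p) (hp1 : p < 1) (m : ℕ) :
    eulerCoeff p (m + 1) * (1 - p ^ (m + 1)) = -(eulerCoeff p m * p ^ m) := by
  have h1 := (qPoch_pos hp0.le hp1 hp0.le hp1 m).ne'
  have h2 : 1 - p * p ^ m ≠ 0 := by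
    have := qPoch_pos hp0.le hp1 hp0.le hp1 (m + 1)
    rw [qPoch_succ] at this
    exact (pos_of_mul_pos_right this (qPoch_pos hp0.le hp1 hp0.le hp1 m).le).ne'
  rw [eulerCoeff, eulerCoeff, qPoch_succ, Nat.choose_succ_succ', Nat.choose_one_right, pow_add,
    pow_succ' p m]
  field_simp
  ring

theorem eulerSeries_eq_one_sub_mul (hp0 : 0 < p) (hp1 : p < 1) (w : ℝ) :
    eulerSeries p w = (1 - w) * eulerSeries p (p * w) := by
  have hw := summable_eulerCoeff_mul_pow hp0 hp1 w
  have hpw := summable_eulerCoeff_mul_pow hp0 hp1 (p * w)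
  have hdiff : eulerSeries p w - eulerSeries p (p * w) = -w * eulerSeries p (p * w) := by
    rw [eulerSeries, eulerSeries, ← hw.tsum_sub hpw, (hw.sub hpw).tsum_eq_zero_add,
      ← tsum_mul_left]
    simp only [pow_zero, mul_one, sub_self, zero_add]
    refine tsum_congr fun m => ?_
    linear_combination (w * w ^ m) * eulerCoeff_succ_mul hp0 hp1 m
  linear_combination hdiff

theorem eulerSeries_eq_qPoch_mul (hp0 : 0 < p) (hp1 : p < 1) (w : ℝ) (n : ℕ) :
    eulerSeries p w = qPoch w p n * eulerSeries p (w * p ^ n) := by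
  induction n with
  | zero => simp [qPoch]
  | succ n ih =>
    rw [ih, eulerSeries_eq_one_sub_mul hp0 hp1 (w * p ^ n), qPoch_succ, pow_succ]
    ring_nf

theorem eulerSeries_eq_zero (hp0 : 0 < p) (hp1 : p < 1) {w : ℝ} {j : ℕ} (h : w * p ^ j = 1) :
    eulerSeries p w = 0 := by
  rw [eulerSeries_eq_qPoch_mul hp0 hp1 w (j + 1), qPoch_succ, h, sub_self, mul_zero, zero_mul]

theorem abs_eulerSeries_le (hp0 : 0 < p) (hp1 : p < 1) {w : ℝ} (hw : |w| ≤ 1) :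
    |eulerSeries p w| ≤ ∑' m, |eulerCoeff p m| :=
  abs_tsum_mul_pow_le (summable_abs_eulerCoeff hp0 hp1) hw

/-- Near `0` the series is close to `1`, and the functional equation transports positivity
from `w p ^ N` back to `w`. -/
theorem eulerSeries_pos (hp0 : 0 < p) (hp1 : p < 1) {w : ℝ} (hw0 : 0 ≤ w) (hw1 : w < 1) :
    0 < eulerSeries p w := by
  set K := ∑' m, |eulerCoeff p m|
  have hK : 0 ≤ K := tsum_nonneg fun m => abs_nonneg _
  obtain ⟨N, hN⟩ := exists_pow_lt_of_lt_one (show 0 < 1 / (K + 1) by positivity) hp1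
  have hu0 : 0 ≤ w * p ^ N := by positivity
  have hu1 : w * p ^ N ≤ p ^ N := mul_le_of_le_one_left (pow_nonneg hp0.le N) hw1.le
  have hsmall : K * (w * p ^ N) < 1 := by
    calc K * (w * p ^ N) ≤ K * (1 / (K + 1)) := mul_le_mul_of_nonneg_left (hu1.trans hN.le) hK
      _ < 1 := by rw [mul_one_div, div_lt_one (by positivity)]; linarith
  have hclose := abs_tsum_mul_pow_sub_le (summable_abs_eulerCoeff hp0 hp1)
    (u := w * p ^ N) (by rw [abs_of_nonneg hu0]; exact hu1.trans (pow_le_one₀ hp0.le hp1.le))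
  rw [eulerCoeff_zero, abs_of_nonneg hu0] at hclose
  rw [eulerSeries_eq_qPoch_mul hp0 hp1 w N]
  exact mul_pos (qPoch_pos hp0.le hp1 hw0 hw1 N) (by
    have := (abs_le.mp hclose).1
    rw [eulerSeries]
    linarith)

theorem tsum_eulerCoeff_mul_eulerSeries_comm (hp0 : 0 < p) (hp1 : p < 1) (α β : ℝ) :
    ∑' n, eulerCoeff p n * α ^ n * eulerSeries p (β * p ^ n) =
      ∑' n, eulerCoeff p n * β ^ n * eulerSeries p (α * p ^ n) := by
  set G : ℕ → ℕ → ℝ := fun n m => eulerCoeff p n * α ^ n * (eulerCoeff p m * β ^ m) * p ^ (n * m)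
  have hG : Summable (Function.uncurry G) := by
    refine .of_norm_bounded (Summable.mul_norm (f := fun n => eulerCoeff p n * α ^ n)
      (g := fun m => eulerCoeff p m * β ^ m) (summable_eulerCoeff_mul_pow hp0 hp1 α).norm
      (summable_eulerCoeff_mul_pow hp0 hp1 β).norm) fun nm => ?_
    rw [Function.uncurry_apply_pair, norm_mul _ (p ^ _)]
    exact mul_le_of_le_one_right (norm_nonneg _) (by
      rw [Real.norm_eq_abs, abs_of_pos (pow_pos hp0 _)]
      exact pow_le_one₀ hp0.le hp1.le)
  have hexpand : ∀ α β : ℝ, ∀ n, eulerCoeff p n * α ^ n * eulerSeries p (β * p ^ n) =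
      ∑' m, eulerCoeff p n * α ^ n * (eulerCoeff p m * β ^ m) * p ^ (n * m) := fun α β n => by
    rw [eulerSeries, ← tsum_mul_left]
    exact tsum_congr fun m => by rw [mul_pow, pow_mul]; ring
  calc ∑' n, eulerCoeff p n * α ^ n * eulerSeries p (β * p ^ n) = ∑' n, ∑' m, G n m :=
        tsum_congr (hexpand α β)
    _ = ∑' m, ∑' n, G n m := hG.tsum_comm.symm
    _ = _ := tsum_congr fun m => by
        rw [hexpand β α m]
        exact tsum_congr fun n => by simp only [G, Nat.mul_comm n m]; ring

end EulerSeries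

theorem zpow_mem_Rq (q : ℝ) (n : ℤ) : q ^ n ∈ Rq q := ⟨n, rfl⟩

theorem mul_mem_Rq {q x y : ℝ} (hq : q ≠ 0) (hx : x ∈ Rq q) (hy : y ∈ Rq q) : x * y ∈ Rq q := by
  obtain ⟨a, rfl⟩ := hx
  obtain ⟨b, rfl⟩ := hy
  exact ⟨a + b, (zpow_add₀ hq a b).symm⟩

theorem zpow_mul_zpow_rpow {q : ℝ} (hq : 0 < q) (s : ℝ) (n : ℤ) :
    q ^ n * (q ^ n) ^ s = (q ^ (s + 1)) ^ n := by
  rw [← Real.rpow_intCast, ← Real.rpow_intCast, ← Real.rpow_mul hq.le, ← Real.rpow_mul hq.le,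
    ← Real.rpow_add hq]
  ring_nf

section QBessel

variable {q v : ℝ}

theorem rpow_two_mul_add_two_lt_one (hq0 : 0 < q) (hq1 : q < 1) (hv : -1 < v) :
    q ^ (2 * v + 2) < 1 :=
  Real.rpow_lt_one hq0.le hq1 (by linarith)

/-- Termwise, `E(c) / (c;q²)_n = E(c q^(2n))` by `eulerSeries_eq_qPoch_mul`; then the two Euler
series are exchanged. -/
theorem eulerSeries_mul_jv (hq0 : 0 < q) (hq1 : q < 1) (hv : -1 < v) (x : ℝ) :
    eulerSeries (q ^ 2) (q ^ (2 * v + 2)) * jv q v x =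
      ∑' m, eulerCoeff (q ^ 2) m * (q ^ (2 * v + 2)) ^ m *
        eulerSeries (q ^ 2) (x ^ 2 * (q ^ 2) ^ (m + 1)) := by
  have hP0 : 0 < q ^ 2 := by positivity
  have hP1 : q ^ 2 < 1 := by nlinarith
  have hc0 : 0 < q ^ (2 * v + 2) := Real.rpow_pos_of_pos hq0 _
  have hc1 := rpow_two_mul_add_two_lt_one hq0 hq1 hv
  simp_rw [pow_succ' (q ^ 2), ← mul_assoc]
  rw [← tsum_eulerCoeff_mul_eulerSeries_comm hP0 hP1, jv, ← tsum_mul_left]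
  refine tsum_congr fun n => ?_
  have hQc := (qPoch_pos hP0.le hP1 hc0.le hc1 n).ne'
  have hQP := (qPoch_pos hP0.le hP1 hP0.le hP1 n).ne'
  rw [eulerSeries_eq_qPoch_mul hP0 hP1 _ n, eulerCoeff, ← two_mul_choose_two_add_self, pow_mul,
    pow_mul, pow_add, mul_pow]
  generalize qPoch (q ^ (2 * v + 2)) (q ^ 2) n = A at hQc ⊢
  generalize qPoch (q ^ 2) (q ^ 2) n = B at hQP ⊢
  field_simp

theorem zpow_sq_mul_pow_sq (hq : q ≠ 0) (t : ℤ) (k : ℕ) :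
    (q ^ t) ^ 2 * (q ^ 2) ^ k = q ^ (2 * (t + k)) := by
  rw [← zpow_natCast (q ^ t), ← zpow_mul, ← zpow_natCast (q ^ 2), ← zpow_natCast q 2,
    ← zpow_mul, ← zpow_add₀ hq]
  ring_nf

theorem pow_choose_two_le (hq0 : 0 < q) (hq1 : q ≤ 1) (m : ℕ) :
    (q ^ 2) ^ m.choose 2 ≤ q ^ m / q := by
  rw [le_div_iff₀ hq0, ← pow_mul, ← pow_succ]
  exact pow_le_pow_of_le_one hq0.le hq1 (le_two_mul_choose_two_add_one m)

/-- In `eulerSeries_mul_jv` at `x = q^t`, the terms with `m < (-t).toNat` evaluate the Euler series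
at a power `q^(2j)` with `j ≤ 0`, where it vanishes; the remaining ones are geometric in `m`. -/
theorem abs_jv_zpow_le (hq0 : 0 < q) (hq1 : q < 1) (hv : -1 < v) :
    ∃ C, ∀ t : ℤ, |jv q v (q ^ t)| ≤ C * (q * q ^ (2 * v + 2)) ^ (-t).toNat := by
  have hP0 : 0 < q ^ 2 := by positivity
  have hP1 : q ^ 2 < 1 := by nlinarith
  set c := q ^ (2 * v + 2)
  have hc0 : 0 < c := Real.rpow_pos_of_pos hq0 _
  have hc1 : c < 1 := rpow_two_mul_add_two_lt_one hq0 hq1 hv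
  have hr0 : 0 ≤ q * c := by positivity
  have hr1 : q * c < 1 := by nlinarith
  set K := ∑' m, |eulerCoeff (q ^ 2) m|
  set δ := (1 - q ^ 2) ^ (1 - q ^ 2)⁻¹
  have hδ : 0 < δ := Real.rpow_pos_of_pos (by linarith) _
  have hE := eulerSeries_pos hP0 hP1 hc0.le hc1
  refine ⟨(eulerSeries (q ^ 2) c)⁻¹ * (K / (δ * q) * (1 - q * c)⁻¹), fun t => ?_⟩
  have key : |eulerSeries (q ^ 2) c * jv q v (q ^ t)| ≤
      K / (δ * q) * (q * c) ^ (-t).toNat * (1 - q * c)⁻¹ := by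
    rw [eulerSeries_mul_jv hq0 hq1 hv]
    refine abs_tsum_le_of_eq_zero_of_abs_le_geometric _ hr0 hr1 (fun m hm => ?_) fun m hm => ?_
    · rw [eulerSeries_eq_zero hP0 hP1 (j := (-t).toNat - (m + 1)), mul_zero]
      rw [mul_assoc, ← pow_add, Nat.add_sub_cancel' hm, zpow_sq_mul_pow_sq hq0.ne',
        show t + ((-t).toNat : ℤ) = 0 by omega, mul_zero, zpow_zero]
    · have harg : |(q ^ t) ^ 2 * (q ^ 2) ^ (m + 1)| ≤ 1 := by
        rw [zpow_sq_mul_pow_sq hq0.ne', abs_of_pos (zpow_pos hq0 _)]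
        exact zpow_le_one₀ hq0 hq1.le (by omega)
      rw [abs_mul, abs_mul, abs_of_pos (pow_pos hc0 m)]
      calc _ ≤ (q ^ m / q / δ) * c ^ m * K := by
            gcongr
            · exact (abs_eulerCoeff_le hP0 hP1 m).trans
                (div_le_div_of_nonneg_right (pow_choose_two_le hq0 hq1.le m) hδ.le)
            · exact abs_eulerSeries_le hP0 hP1 harg
        _ = K / (δ * q) * (q * c) ^ m := by
            rw [mul_pow]
            field_simp
  rw [abs_mul, abs_of_pos hE, ← le_div_iff₀' hE] at key
  exact key.trans_eq (by field_simp)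

theorem exists_abs_jv_le (hq0 : 0 < q) (hq1 : q < 1) (hv : -1 < v) :
    ∃ M, ∀ t ∈ Rq q, |jv q v t| ≤ M := by
  obtain ⟨C, hC⟩ := abs_jv_zpow_le hq0 hq1 hv
  have hr : q * q ^ (2 * v + 2) ≤ 1 :=
    mul_le_one₀ hq1.le (by positivity) (rpow_two_mul_add_two_lt_one hq0 hq1 hv).le
  have hC0 : 0 ≤ C := (abs_nonneg _).trans (by simpa using hC 0)
  refine ⟨C, ?_⟩
  rintro _ ⟨t, rfl⟩
  exact (hC t).trans (mul_le_of_le_one_right hC0 (pow_le_one₀ (by positivity) hr))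

theorem jacksonSummable_jv_mul_rpow (hq0 : 0 < q) (hq1 : q < 1) (hv : -1 < v) {x : ℝ}
    (hx : x ∈ Rq q) : JacksonSummable q fun t => jv q v (x * t) * t ^ (2 * v + 1) := by
  obtain ⟨a, rfl⟩ := hx
  obtain ⟨C, hC⟩ := abs_jv_zpow_le hq0 hq1 hv
  set c := q ^ (2 * v + 2)
  have hc0 : 0 < c := Real.rpow_pos_of_pos hq0 _
  have hc1 : c < 1 := rpow_two_mul_add_two_lt_one hq0 hq1 hv
  have hsum : Summable fun t : ℤ => c ^ t * |jv q v (q ^ t)| := by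
    refine .of_nat_of_neg_add_one (.of_nonneg_of_le (fun k => by positivity) (fun k => ?_)
      ((summable_geometric_of_lt_one hc0.le hc1).mul_left C))
      (.of_nonneg_of_le (fun k => by positivity) (fun k => ?_)
      ((summable_geometric_of_lt_one hq0.le hq1).mul_left (C * q)))
    · have := hC k
      simp only [zpow_natCast, Int.toNat_neg_natCast, pow_zero, mul_one] at this ⊢
      nlinarith [pow_pos hc0 k]
    · have := mul_le_mul_of_nonneg_left (hC (-(k + 1))) (zpow_nonneg hc0.le (-(k + 1 : ℤ)))
      refine this.trans_eq ?_
      rw [neg_neg, show ((k : ℤ) + 1).toNat = k + 1 by omega, zpow_neg, mul_pow,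
        show ((k : ℤ) + 1) = ((k + 1 : ℕ) : ℤ) by push_cast; ring, zpow_natCast]
      field_simp
      ring
  refine (((Equiv.addLeft a).summable_iff.mpr hsum).mul_left (c ^ (-a))).congr fun n => ?_
  simp only [Function.comp_apply, Equiv.coe_addLeft]
  rw [← mul_assoc, ← zpow_add₀ hc0.ne', neg_add_cancel_left, abs_mul,
    abs_of_pos (Real.rpow_pos_of_pos (zpow_pos hq0 n) _), zpow_add₀ hq0.ne']
  rw [mul_left_comm, zpow_mul_zpow_rpow hq0, show 2 * v + 1 + 1 = 2 * v + 2 by ring,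
    mul_comm]

end QBessel

section Jackson

variable {q : ℝ}

theorem memLqpv_one_iff (q v : ℝ) (f : ℝ → ℝ) :
    MemLqpv q v 1 f ↔ JacksonSummable q fun t => f t * t ^ (2 * v + 1) := by
  simp only [MemLqpv, JacksonSummable, Real.rpow_one, abs_mul, abs_abs]

theorem const_mul_jackson (q a : ℝ) (f : ℝ → ℝ) :
    a * jackson q f = jackson q fun t => a * f t := by
  simp only [jackson, mul_left_comm _ a, ← tsum_mul_left]

theorem jackson_mul_const (q a : ℝ) (f : ℝ → ℝ) :
    jackson q f * a = jackson q fun t => f t * a := by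
  simp only [mul_comm _ a, const_mul_jackson]

def JacksonSummable₂ (q : ℝ) (g : ℝ → ℝ → ℝ) : Prop :=
  Summable fun nm : ℤ × ℤ => q ^ nm.1 * q ^ nm.2 * |g (q ^ nm.1) (q ^ nm.2)|

theorem JacksonSummable₂.of_mul_of_abs_le {A B : ℝ → ℝ} {K : ℝ → ℝ → ℝ} {M : ℝ} (hq : 0 < q)
    (hA : JacksonSummable q A) (hB : JacksonSummable q B)
    (hK : ∀ t ∈ Rq q, ∀ s ∈ Rq q, |K t s| ≤ M) :
    JacksonSummable₂ q fun t s => A t * B s * K t s := by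
  refine .of_nonneg_of_le (fun nm => by positivity) (fun nm => ?_)
    ((hA.mul_of_nonneg hB (fun n => by positivity) fun m => by positivity).mul_left M)
  have hKnm := hK _ (zpow_mem_Rq q nm.1) _ (zpow_mem_Rq q nm.2)
  have hAB : 0 ≤ q ^ nm.1 * |A (q ^ nm.1)| * (q ^ nm.2 * |B (q ^ nm.2)|) := by positivity
  rw [abs_mul, abs_mul]
  nlinarith

theorem abs_zpow_mul_zpow_mul (hq : 0 < q) (n m : ℤ) (a : ℝ) :
    |q ^ n * (q ^ m * a)| = q ^ n * q ^ m * |a| := by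
  rw [abs_mul, abs_mul, abs_of_pos (zpow_pos hq _), abs_of_pos (zpow_pos hq _), mul_assoc]

theorem JacksonSummable₂.summable_uncurry {g : ℝ → ℝ → ℝ} (hq : 0 < q)
    (hg : JacksonSummable₂ q g) :
    Summable (Function.uncurry fun n m : ℤ => q ^ n * (q ^ m * g (q ^ n) (q ^ m))) :=
  .of_abs <| hg.congr fun _ => (abs_zpow_mul_zpow_mul hq _ _ _).symm

theorem JacksonSummable₂.jacksonSummable {g : ℝ → ℝ → ℝ} (hq : 0 < q) (hq1 : q ≤ 1)
    (hg : JacksonSummable₂ q g) : JacksonSummable q fun t => jackson q (g t) := by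
  have h1q : 0 ≤ 1 - q := sub_nonneg.mpr hq1
  refine .of_nonneg_of_le (fun n => by positivity) (fun n => ?_) (hg.prod.mul_left (1 - q))
  calc q ^ n * |jackson q (g (q ^ n))|
      = (1 - q) * ‖∑' m, q ^ n * (q ^ m * g (q ^ n) (q ^ m))‖ := by
        rw [jackson, tsum_mul_left, Real.norm_eq_abs, abs_mul, abs_mul, abs_of_pos (zpow_pos hq n),
          abs_of_nonneg h1q]
        ring
    _ ≤ _ := mul_le_mul_of_nonneg_left (tsum_of_norm_bounded (hg.prod_factor n).hasSum
        fun m => (abs_zpow_mul_zpow_mul hq n m _).le) h1q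

theorem JacksonSummable₂.jackson_comm {g : ℝ → ℝ → ℝ} (hq : 0 < q) (hg : JacksonSummable₂ q g) :
    jackson q (fun t => jackson q (g t)) = jackson q fun s => jackson q fun t => g t s := by
  simp only [jackson, mul_left_comm _ (1 - q), ← tsum_mul_left]
  have hG : Summable (Function.uncurry fun n m : ℤ =>
      (1 - q) * ((1 - q) * (q ^ n * (q ^ m * g (q ^ n) (q ^ m))))) :=
    ((hg.summable_uncurry hq).mul_left (1 - q)).mul_left (1 - q)
  rw [← hG.tsum_comm]
  exact tsum_congr fun s => tsum_congr fun t => by ring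

end Jackson

/-- for `f ∈ L_{q,1,v}` the q-translation is well defined and is given by the
kernel `D_v`. -/
theorem Tqv_welldefined_kernel (q v : ℝ) (hq : 0 < q) (hq1 : q < 1) (hv : -1 < v)
    (f : ℝ → ℝ) (hf : MemLqpv q v 1 f) :
    ∀ x ∈ Rq q, ∀ y ∈ Rq q,
      JacksonSummable q
          (fun t => Fqv q v f t * jv q v (y * t) * jv q v (x * t) * t ^ (2 * v + 1)) ∧
      Tqv q v x f y = jackson q (fun z => f z * Dv q v x y z * z ^ (2 * v + 1)) := by
  intro x hx y hy
  obtain ⟨M, hM⟩ := exists_abs_jv_le hq hq1 hv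
  set g : ℝ → ℝ → ℝ := fun t s => jv q v (x * t) * t ^ (2 * v + 1) * (f s * s ^ (2 * v + 1)) *
    (cqv q v * jv q v (y * t) * jv q v (t * s))
  have hg : JacksonSummable₂ q g :=
    .of_mul_of_abs_le (M := |cqv q v| * M * M) hq (jacksonSummable_jv_mul_rpow hq hq1 hv hx)
      ((memLqpv_one_iff q v f).mp hf) fun t ht s hs => by
        have hyt := hM _ (mul_mem_Rq hq.ne' hy ht)
        rw [abs_mul, abs_mul]
        exact mul_le_mul (mul_le_mul_of_nonneg_left hyt (abs_nonneg _))
          (hM _ (mul_mem_Rq hq.ne' ht hs)) (abs_nonneg _)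
          (mul_nonneg (abs_nonneg _) ((abs_nonneg _).trans hyt))
  have hF : ∀ t, Fqv q v f t * jv q v (y * t) * jv q v (x * t) * t ^ (2 * v + 1) =
      jackson q (g t) := fun t => by
    rw [Fqv, const_mul_jackson, jackson_mul_const, jackson_mul_const, jackson_mul_const]
    exact congrArg _ (funext fun s => by ring)
  refine ⟨by simpa only [hF] using hg.jacksonSummable hq hq1.le, ?_⟩
  simp only [Tqv, hF]
  rw [hg.jackson_comm hq, const_mul_jackson]
  refine congrArg _ (funext fun s => ?_)
  simp only [Dv, const_mul_jackson, jackson_mul_const]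
  exact congrArg _ (funext fun t => by rw [mul_comm s t]; ring)
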